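/- Let g₁ be a finite-dimensional real vector space of real-analytic vector fields on a connected open set U ⊆ ℝⁿ, and x₀ ∈ U. Then the order of singularity at x₀ is bounded on g₁ \ {0}: there exists N ∈ ℕ such that every nonzero v ∈ g₁ has some partial derivative of order at most N not vanishing at x₀. -/

import Mathlib

/-!
The linear maps `v ↦ D^i v(x₀)` cut out a decreasing chain of subspaces
`Kₙ = {v | D^i v(x₀) = 0 for all i ≤ n}` of the finite-dimensional space `g₁`, which must
stabilise at some `N`. An element of `K_N` then has a vanishing Taylor series at `x₀`, so it
vanishes near `x₀` and, by the identity theorem, on all of the connected set `U`.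
-/

open Filter Topology

theorem IsArtinian.exists_forall_le_map_eq_zero_imp {R M : Type*} [Ring R] [AddCommGroup M]
    [Module R M] [IsArtinian R M] {N : ℕ → Type*} [∀ i, AddCommGroup (N i)]
    [∀ i, Module R (N i)] (L : ∀ i, M →ₗ[R] N i) :
    ∃ K, ∀ v, (∀ i ≤ K, L i v = 0) → ∀ i, L i v = 0 := by
  let kers (n : ℕ) : Submodule R M := ⨅ i ≤ n, LinearMap.ker (L i)
  have kers_anti : Antitone kers := fun _ _ hab => biInf_mono fun _ hi => le_trans hi hab
  obtain ⟨K, hK⟩ := IsArtinian.monotone_stabilizes ⟨_, kers_anti.dual_right⟩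
  refine ⟨K, fun v hv i => ?_⟩
  have hvK : v ∈ kers K := by simpa only [kers, Submodule.mem_iInf, LinearMap.mem_ker] using hv
  have hstable : kers K = kers (max K i) := hK (max K i) (le_max_left K i)
  have hvKi : v ∈ kers (max K i) := hstable ▸ hvK
  simp only [kers, Submodule.mem_iInf, LinearMap.mem_ker] at hvKi
  exact hvKi i (le_max_right K i)

section Analytic

variable {𝕜 : Type*} [NontriviallyNormedField 𝕜]
  {E : Type*} [NormedAddCommGroup E] [NormedSpace 𝕜 E]
  {F : Type*} [NormedAddCommGroup F] [NormedSpace 𝕜 F]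

variable (𝕜 E F) in
def analyticAtSubmodule (x : E) : Submodule 𝕜 (E → F) where
  carrier := {f | AnalyticAt 𝕜 f x}
  add_mem' := AnalyticAt.add
  zero_mem' := analyticAt_const
  smul_mem' _ _ hf := hf.const_smul

variable (𝕜) in
noncomputable def iteratedFDerivAtLinearMap [CompleteSpace F] (i : ℕ) (x : E) :
    analyticAtSubmodule 𝕜 E F x →ₗ[𝕜] E [×i]→L[𝕜] F where
  toFun f := iteratedFDeriv 𝕜 i f x
  map_add' f g := iteratedFDeriv_add_apply f.2.contDiffAt g.2.contDiffAt
  map_smul' _ f := iteratedFDeriv_const_smul_apply f.2.contDiffAt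

theorem AnalyticAt.eventuallyEq_zero_of_iteratedFDeriv_eq_zero [CharZero 𝕜] [CompleteSpace F]
    {f : E → F} {x : E} (hf : AnalyticAt 𝕜 f x) (h : ∀ i, iteratedFDeriv 𝕜 i f x = 0) :
    f =ᶠ[𝓝 x] 0 := by
  obtain ⟨p, r, hp⟩ := hf
  filter_upwards [Metric.eball_mem_nhds x hp.r_pos] with z hz
  have hzx : z - x ∈ Metric.eball (0 : E) r := by
    simpa [Metric.mem_eball, edist_eq_enorm_sub, edist_zero_right] using hz
  have hsum := hp.hasSum_iteratedFDeriv hzx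
  simp only [h, zero_apply, smul_zero, add_sub_cancel] at hsum
  exact hsum.unique hasSum_zero

theorem AnalyticOnNhd.eqOn_zero_of_iteratedFDeriv_eq_zero [CharZero 𝕜] [CompleteSpace F]
    {f : E → F} {U : Set E} {x : E} (hf : AnalyticOnNhd 𝕜 f U) (hU : IsPreconnected U)
    (hx : x ∈ U) (h : ∀ i, iteratedFDeriv 𝕜 i f x = 0) : Set.EqOn f 0 U :=
  hf.eqOn_zero_of_preconnected_of_eventuallyEq_zero hU hx
    ((hf x hx).eventuallyEq_zero_of_iteratedFDeriv_eq_zero h)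

end Analytic

theorem stmt3_general {n : ℕ} (U : Set (Fin n → ℝ)) (hUconn : IsConnected U)
    (x₀ : Fin n → ℝ) (hx₀ : x₀ ∈ U)
    (g₁ : Submodule ℝ ((Fin n → ℝ) → (Fin n → ℝ)))
    (hanalytic : ∀ v ∈ g₁, AnalyticOnNhd ℝ v U)
    (hfin : FiniteDimensional ℝ g₁) :
    ∃ N : ℕ, ∀ v ∈ g₁, (∃ x ∈ U, v x ≠ 0) →
      ∃ i ≤ N, iteratedFDeriv ℝ i v x₀ ≠ 0 := by
  have hle : g₁ ≤ analyticAtSubmodule ℝ _ _ x₀ := fun v hv => hanalytic v hv x₀ hx₀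
  obtain ⟨N, hN⟩ := IsArtinian.exists_forall_le_map_eq_zero_imp fun i =>
    (iteratedFDerivAtLinearMap ℝ i x₀).comp (Submodule.inclusion hle)
  refine ⟨N, fun v hv ⟨x, hxU, hvx⟩ => ?_⟩
  by_contra! hlow
  have hall : ∀ i, iteratedFDeriv ℝ i v x₀ = 0 := hN ⟨v, hv⟩ hlow
  exact hvx <| (hanalytic v hv).eqOn_zero_of_iteratedFDeriv_eq_zero hUconn.isPreconnected hx₀
    hall hxU

/-- for a finite-dimensional real vector space `g₁` of real-analytic
vector fields on a connected open set `U ⊆ ℝⁿ` and `x₀ ∈ U`, the order of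
singularity at `x₀` is bounded on the nonzero elements of `g₁`: there is `N ∈ ℕ`
such that every `v ∈ g₁` which is not identically zero on `U` has some partial
derivative of order at most `N` not vanishing at `x₀`. -/
theorem stmt3 {n : ℕ} (U : Set (Fin n → ℝ)) (hU : IsOpen U) (hUconn : IsConnected U)
    (x₀ : Fin n → ℝ) (hx₀ : x₀ ∈ U)
    (g₁ : Submodule ℝ ((Fin n → ℝ) → (Fin n → ℝ)))
    (hanalytic : ∀ v ∈ g₁, AnalyticOnNhd ℝ v U)
    (hfin : FiniteDimensional ℝ g₁) :
    ∃ N : ℕ, ∀ v ∈ g₁, (∃ x ∈ U, v x ≠ 0) →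
      ∃ i ≤ N, iteratedFDeriv ℝ i v x₀ ≠ 0 :=
  stmt3_general U hUconn x₀ hx₀ g₁ hanalytic hfin
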